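/- arXiv:2602.03067 — 8 statements merged into one kernel-verified Lean document; each statement's English description precedes it below -/
import Mathlib

section
/- There exists an absolute constant c > 0 (independent of all parameters) such that for all positive integers n, m, d, M, B_N with 1 ≤ B_N ≤ n, M ≥ d + 2, and B_N ≥ M/(4(d+2)), one has ⌈n/B_N⌉ · (B_N·d + m·d + m + B_N) ≤ c · (n·d + m·d + n·m·d²/M). In particular, the total HBM access count of the streaming f̂-update kernel, which loads each row block of size B_N once (cost B_N·d), streams all of K and the bias across each of the ⌈n/B_N⌉ row-block passes (cost m·d + m per pass), and writes each output block once (cost B_N), is O(n·d + m·d + n·m·d²/M). -/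
/-!
Write `q = ⌈n / B_N⌉` for the number of row blocks. Since `B_N ≤ n`, rounding up at most doubles
`n / B_N`, so `q · B_N ≤ 2n`: the block loads and output writes cost `O(n d)`. The lower bound on
`B_N` says `M ≤ 4 (d + 2) B_N ≤ 12 d B_N`, hence `q ≤ 24 n d / M`, and the `q` passes over the key
matrix and the bias cost `q · m (d + 1) ≤ 2 q m d = O(n m d² / M)`.
-/

section LinearOrderedField

variable {K : Type*} [Field K] [LinearOrder K] [IsStrictOrderedRing K]

theorem Int.ceil_div_mul_le_two_mul [FloorRing K] {x b : K} (hb : 0 < b) (hbx : b ≤ x) :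
    (⌈x / b⌉ : K) * b ≤ 2 * x := by
  have hceil : (⌈x / b⌉ : K) ≤ 2 * (x / b) :=
    Int.ceil_le_two_mul <| by
      linarith [(one_le_div hb).mpr hbx, (inv_lt_one_of_one_lt₀ one_lt_two : (2 : K)⁻¹ < 1)]
  calc (⌈x / b⌉ : K) * b ≤ 2 * (x / b) * b := by gcongr
    _ = 2 * x := by field_simp

theorem le_twelve_mul_of_div_le {M d B : K} (hd : 1 ≤ d) (hB : 0 ≤ B)
    (hMB : M / (4 * (d + 2)) ≤ B) : M ≤ 12 * d * B := by
  rw [div_le_iff₀ (by linarith)] at hMB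
  nlinarith

theorem streaming_cost_le {q n m d M B : K} (hq : 0 ≤ q) (hn : 0 ≤ n) (hm : 0 ≤ m) (hd : 1 ≤ d)
    (hM : 0 < M) (hqB : q * B ≤ 2 * n) (hqM : q * M ≤ 24 * n * d) :
    q * (B * d + m * d + m + B) ≤ 48 * (n * d + m * d + n * m * d ^ 2 / M) := by
  have hd1 : 0 ≤ d - 1 := by linarith
  have hblocks : q * B * (d + 1) ≤ 4 * n * d := by
    nlinarith [mul_le_mul_of_nonneg_right hqB (by linarith : (0 : K) ≤ d + 1), mul_nonneg hn hd1]
  have hpasses : q * m * (d + 1) ≤ 48 * (n * m * d ^ 2 / M) := by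
    rw [mul_div_assoc', le_div_iff₀ hM]
    nlinarith [mul_le_mul_of_nonneg_left hqM (by positivity : 0 ≤ 2 * m * d),
      mul_nonneg (mul_nonneg (mul_nonneg hq hm) hM.le) hd1]
  nlinarith [mul_nonneg hm (zero_le_one.trans hd)]

end LinearOrderedField

/-- IO complexity of the streaming `f̂`-update kernel: there is an absolute
constant `c > 0` such that for all positive `n, m, d, M, B_N` with
`B_N ≤ n`, `M ≥ d + 2` and `B_N ≥ M/(4(d+2))`, the total HBM access count
`⌈n/B_N⌉·(B_N·d + m·d + m + B_N)` is at most
`c·(n·d + m·d + n·m·d²/M)`. -/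
theorem flash_sinkhorn_io_bound :
    ∃ c : ℝ, 0 < c ∧
      ∀ n m d M B_N : ℕ,
        1 ≤ n → 1 ≤ m → 1 ≤ d → 1 ≤ B_N → B_N ≤ n → d + 2 ≤ M →
        (M : ℝ) / (4 * ((d : ℝ) + 2)) ≤ (B_N : ℝ) →
        (⌈(n : ℝ) / (B_N : ℝ)⌉ : ℝ)
            * ((B_N : ℝ) * d + (m : ℝ) * d + m + B_N)
          ≤ c * ((n : ℝ) * d + (m : ℝ) * d
                  + (n : ℝ) * m * (d : ℝ) ^ 2 / M) := by
  refine ⟨48, by norm_num, fun n m d M B_N _ _ hd hB hBn hdM hMB => ?_⟩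
  have hd' : (1 : ℝ) ≤ d := by exact_mod_cast hd
  have hB' : (0 : ℝ) < B_N := by exact_mod_cast hB
  have hM : (0 : ℝ) < M := by exact_mod_cast (by omega : 0 < M)
  set q : ℝ := (⌈(n : ℝ) / B_N⌉ : ℝ)
  have hq : 0 ≤ q := by positivity
  have hqB : q * B_N ≤ 2 * n := Int.ceil_div_mul_le_two_mul hB' (by exact_mod_cast hBn)
  have hqM : q * M ≤ 24 * n * d :=
    calc q * M ≤ q * (12 * d * B_N) := by gcongr; exact le_twelve_mul_of_div_le hd' hB'.le hMB
      _ = 12 * d * (q * B_N) := by ring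
      _ ≤ 24 * n * d := by linarith [mul_le_mul_of_nonneg_left hqB (by positivity : (0 : ℝ) ≤ 12 * d)]
  exact streaming_cost_le hq (Nat.cast_nonneg n) (Nat.cast_nonneg m) hd' hM hqB hqM
end

section
/- Let f̂ ∈ ℝ^n, ĝ ∈ ℝ^m be arbitrary, let P = P(f̂, ĝ), let f̂⁺ = −ε·LSE_row(S_X(ĝ)), and define the row-mass vector r ∈ ℝ^n by r_i = a_i·exp((f̂_i − f̂⁺_i)/ε). Then (i) P·1_m = r, and (ii) for every p ≥ 1 and every V ∈ ℝ^{m×p}, P·V = diag(r)·Softmax_row(S_X(ĝ))·V. -/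
/-!
Absorbing `b` into the exponent via `b_j = exp (log b_j)` shows that row `i` of `P` is
`κ_i · exp (S_X(ĝ) i ·)` with `κ_i = a_i exp (f̂_i / ε)`, and the definition of `f̂⁺` makes
`r_i = κ_i · Σ_j exp (S_X(ĝ) i j)`. Both claims follow: the row sums of `P` are `r`, and
dividing each row by its sum leaves the row softmax of `S_X(ĝ)`.
-/

open Real Finset

lemma exp_add_mul_log_div {ε : ℝ} (hε : ε ≠ 0) {b : ℝ} (hb : 0 < b) (x : ℝ) :
    exp ((x + ε * log b) / ε) = b * exp (x / ε) := by
  rw [add_div, mul_div_cancel_left₀ _ hε, exp_add, exp_log hb, mul_comm]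

lemma exp_sub_neg_mul_log_div {ε : ℝ} (hε : ε ≠ 0) {s : ℝ} (hs : 0 < s) (x : ℝ) :
    exp ((x - -ε * log s) / ε) = exp (x / ε) * s := by
  rw [neg_mul, sub_neg_eq_add, exp_add_mul_log_div hε hs, mul_comm]

lemma mul_sum_mul_sum_div_sum_mul {ι K : Type*} [Fintype ι] [Field K] {w : ι → K}
    (hw : ∑ k, w k ≠ 0) (c : K) (v : ι → K) :
    (c * ∑ k, w k) * ∑ j, (w j / ∑ k, w k) * v j = ∑ j, c * w j * v j := by
  rw [mul_assoc, mul_sum, mul_sum]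
  refine sum_congr rfl fun j _ => ?_
  field_simp

theorem transport_apply_as_attention_general
    (n m : ℕ) (hm : 0 < m)
    (ε : ℝ) (hε : 0 < ε)
    (a : Fin n → ℝ) (b : Fin m → ℝ)
    (hb : ∀ j, 0 < b j)
    (fh : Fin n → ℝ) (gh : Fin m → ℝ)
    (QK : Fin n → Fin m → ℝ)
    (SX : Fin n → Fin m → ℝ)
    (hSX : ∀ i j, SX i j = (QK i j + gh j + ε * Real.log (b j)) / ε)
    (P : Fin n → Fin m → ℝ)
    (hP : ∀ i j, P i j = a i * b j * Real.exp ((fh i + gh j + QK i j) / ε))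
    (fplus : Fin n → ℝ)
    (hfplus : ∀ i, fplus i = -ε * Real.log (∑ j, Real.exp (SX i j)))
    (r : Fin n → ℝ)
    (hr : ∀ i, r i = a i * Real.exp ((fh i - fplus i) / ε)) :
    (∀ i, ∑ j, P i j = r i)
    ∧ (∀ p : ℕ, 1 ≤ p → ∀ V : Fin m → Fin p → ℝ, ∀ i c,
        ∑ j, P i j * V j c
          = r i * ∑ j, (Real.exp (SX i j) / ∑ k, Real.exp (SX i k)) * V j c) := by
  have hZ : ∀ i, 0 < ∑ j, exp (SX i j) := fun i =>
    sum_pos (fun j _ => exp_pos _) (univ_nonempty_iff.2 ⟨⟨0, hm⟩⟩)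
  have hP_row : ∀ i j, P i j = a i * exp (fh i / ε) * exp (SX i j) := by
    intro i j
    rw [hP, hSX, exp_add_mul_log_div hε.ne' (hb j),
      show (fh i + gh j + QK i j) / ε = fh i / ε + (QK i j + gh j) / ε by ring, exp_add]
    ring
  have hr_row : ∀ i, r i = a i * exp (fh i / ε) * ∑ j, exp (SX i j) := fun i => by
    rw [hr, hfplus, exp_sub_neg_mul_log_div hε.ne' (hZ i), mul_assoc]
  refine ⟨fun i => ?_, fun p _ V i c => ?_⟩
  · rw [hr_row, mul_sum]
    exact sum_congr rfl fun j _ => hP_row i j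
  · rw [hr_row, mul_sum_mul_sum_div_sum_mul (hZ i).ne']
    simp only [hP_row]

/-- Transport-matrix application as an attention output (row form).
For arbitrary shifted potentials `(f̂, ĝ)`, with
`P i j = a i * b j * exp((f̂ i + ĝ j + (QKᵀ) i j)/ε)`,
`f̂⁺ = -ε·LSE_row(S_X(ĝ))` and row-mass `r i = a i * exp((f̂ i - f̂⁺ i)/ε)`,
one has (i) `P·1_m = r` and (ii) `P·V = diag(r)·Softmax_row(S_X(ĝ))·V`
for every `V ∈ ℝ^{m×p}`. -/
theorem transport_apply_as_attention
    (n m d : ℕ) (hn : 0 < n) (hm : 0 < m) (hd : 0 < d)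
    (X : Fin n → Fin d → ℝ) (Y : Fin m → Fin d → ℝ)
    (ε : ℝ) (hε : 0 < ε)
    (a : Fin n → ℝ) (b : Fin m → ℝ)
    (ha : ∀ i, 0 < a i) (hb : ∀ j, 0 < b j)
    (fh : Fin n → ℝ) (gh : Fin m → ℝ)
    (QK : Fin n → Fin m → ℝ) (hQK : ∀ i j, QK i j = 2 * ∑ t, X i t * Y j t)
    (SX : Fin n → Fin m → ℝ)
    (hSX : ∀ i j, SX i j = (QK i j + gh j + ε * Real.log (b j)) / ε)
    (P : Fin n → Fin m → ℝ)
    (hP : ∀ i j, P i j = a i * b j * Real.exp ((fh i + gh j + QK i j) / ε))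
    (fplus : Fin n → ℝ)
    (hfplus : ∀ i, fplus i = -ε * Real.log (∑ j, Real.exp (SX i j)))
    (r : Fin n → ℝ)
    (hr : ∀ i, r i = a i * Real.exp ((fh i - fplus i) / ε)) :
    (∀ i, ∑ j, P i j = r i)
    ∧ (∀ p : ℕ, 1 ≤ p → ∀ V : Fin m → Fin p → ℝ, ∀ i c,
        ∑ j, P i j * V j c
          = r i * ∑ j, (Real.exp (SX i j) / ∑ k, Real.exp (SX i k)) * V j c) :=
  transport_apply_as_attention_general n m hm ε hε a b hb fh gh QK SX hSX P hP fplus hfplus r hr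
end

section
/- If (f̂*, ĝ*) is a Sinkhorn fixed point, i.e. f̂* = −ε·LSE_row(S_X(ĝ*)) and ĝ* = −ε·LSE_row(S_Y(f̂*)), then the induced coupling P(f̂*, ĝ*) has the prescribed marginals: P(f̂*, ĝ*)·1_m = a and P(f̂*, ĝ*)ᵀ·1_n = b. -/
/-- At a Sinkhorn fixed point `(f̂*, ĝ*)` of the shifted LSE updates, the
induced coupling `P(f̂*, ĝ*)` has the prescribed marginals:
`P·1_m = a` and `Pᵀ·1_n = b`. -/
theorem sinkhorn_fixed_point_marginals
    (n m d : ℕ) (hn : 0 < n) (hm : 0 < m) (hd : 0 < d)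
    (X : Fin n → Fin d → ℝ) (Y : Fin m → Fin d → ℝ)
    (ε : ℝ) (hε : 0 < ε)
    (a : Fin n → ℝ) (b : Fin m → ℝ)
    (ha : ∀ i, 0 < a i) (hb : ∀ j, 0 < b j)
    (fh : Fin n → ℝ) (gh : Fin m → ℝ)
    (QK : Fin n → Fin m → ℝ) (hQK : ∀ i j, QK i j = 2 * ∑ t, X i t * Y j t)
    (SX : Fin n → Fin m → ℝ)
    (hSX : ∀ i j, SX i j = (QK i j + gh j + ε * Real.log (b j)) / ε)
    (SY : Fin m → Fin n → ℝ)
    (hSY : ∀ j i, SY j i = (QK i j + fh i + ε * Real.log (a i)) / ε)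
    (P : Fin n → Fin m → ℝ)
    (hP : ∀ i j, P i j = a i * b j * Real.exp ((fh i + gh j + QK i j) / ε))
    -- Sinkhorn fixed-point equations
    (hfix_f : ∀ i, fh i = -ε * Real.log (∑ j, Real.exp (SX i j)))
    (hfix_g : ∀ j, gh j = -ε * Real.log (∑ i, Real.exp (SY j i))) :
    (∀ i, ∑ j, P i j = a i) ∧ (∀ j, ∑ i, P i j = b j) := by
  constructor
  · intro i
    have hS : (0:ℝ) < ∑ j, Real.exp (SX i j) := by
      apply Finset.sum_pos (fun j _ => Real.exp_pos _)
      exact Finset.univ_nonempty_iff.mpr ⟨⟨0, hm⟩⟩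
    have hexpSX : ∀ j, Real.exp (SX i j) = b j * Real.exp ((gh j + QK i j) / ε) := by
      intro j
      rw [hSX]
      have : (QK i j + gh j + ε * Real.log (b j)) / ε
          = (gh j + QK i j) / ε + Real.log (b j) := by
        field_simp; ring
      rw [this, Real.exp_add, Real.exp_log (hb j)]; ring
    have hf : Real.exp (fh i / ε) = (∑ j, Real.exp (SX i j))⁻¹ := by
      rw [hfix_f i]
      have : -ε * Real.log (∑ j, Real.exp (SX i j)) / ε
          = -Real.log (∑ j, Real.exp (SX i j)) := by
        field_simp
      rw [this, Real.exp_neg, Real.exp_log hS]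
    have : ∑ j, P i j = a i * Real.exp (fh i / ε) * ∑ j, Real.exp (SX i j) := by
      rw [Finset.mul_sum]
      apply Finset.sum_congr rfl
      intro j _
      rw [hP, hexpSX]
      have : (fh i + gh j + QK i j) / ε = fh i / ε + (gh j + QK i j) / ε := by
        field_simp; ring
      rw [this, Real.exp_add]; ring
    rw [this, hf, mul_assoc, inv_mul_cancel₀ (ne_of_gt hS), mul_one]
  · intro j
    have hS : (0:ℝ) < ∑ i, Real.exp (SY j i) := by
      apply Finset.sum_pos (fun i _ => Real.exp_pos _)
      exact Finset.univ_nonempty_iff.mpr ⟨⟨0, hn⟩⟩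
    have hexpSY : ∀ i, Real.exp (SY j i) = a i * Real.exp ((fh i + QK i j) / ε) := by
      intro i
      rw [hSY]
      have : (QK i j + fh i + ε * Real.log (a i)) / ε
          = (fh i + QK i j) / ε + Real.log (a i) := by
        field_simp; ring
      rw [this, Real.exp_add, Real.exp_log (ha i)]; ring
    have hg : Real.exp (gh j / ε) = (∑ i, Real.exp (SY j i))⁻¹ := by
      rw [hfix_g j]
      have : -ε * Real.log (∑ i, Real.exp (SY j i)) / ε
          = -Real.log (∑ i, Real.exp (SY j i)) := by
        field_simp
      rw [this, Real.exp_neg, Real.exp_log hS]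
    have : ∑ i, P i j = b j * Real.exp (gh j / ε) * ∑ i, Real.exp (SY j i) := by
      rw [Finset.mul_sum]
      apply Finset.sum_congr rfl
      intro i _
      rw [hP, hexpSY]
      have : (fh i + gh j + QK i j) / ε = gh j / ε + (fh i + QK i j) / ε := by
        field_simp; ring
      rw [this, Real.exp_add]; ring
    rw [this, hg, mul_assoc, inv_mul_cancel₀ (ne_of_gt hS), mul_one]
end

section
/- Let (f̂*, ĝ*) be a Sinkhorn fixed point, i.e. f̂* = −ε·LSE_row(S_X(ĝ*)) and ĝ* = −ε·LSE_row(S_Y(f̂*)), and write P* = P(f̂*, ĝ*) and S_X* = S_X(ĝ*). Then the barycentric projection admits the attention form diag(a)⁻¹·P*·Y = Softmax_row(S_X*)·Y, i.e. T_ε(x_i) := (1/a_i)·Σ_j P*_{ij} y_j equals the i-th row of Softmax_row(S_X*)·Y; moreover, for each i, 2·a_i·(x_i − T_ε(x_i)) = 2·Σ_j P*_{ij}·(x_i − y_j), so the gradient expression 2·diag(a)·(X − Softmax_row(S_X*)·Y) equals 2·(diag(a)·X − P*·Y). -/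
/-! At the fixed point `f̂ = -ε LSE_row(S_X(ĝ))`, the factor `exp(f̂_i / ε)` is exactly the
reciprocal of the softmax normalizer of row `i`, while `b_j exp((ĝ_j + (QKᵀ)_{ij}) / ε)` is
`exp((S_X)_{ij})`. Hence row `i` of the coupling is `a_i · Softmax_row(S_X)_i`: it has mass `a_i`,
dividing by `a_i` gives the attention weights, and the mass identity turns
`a_i x_i - Σ_j P_{ij} y_j` into `Σ_j P_{ij} (x_i - y_j)`. -/

open Real Finset

noncomputable section

namespace Sinkhorn

variable {ι : Type*} [Fintype ι]

def softmax (s : ι → ℝ) (j : ι) : ℝ :=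
  exp (s j) / ∑ k, exp (s k)

theorem sum_exp_pos [Nonempty ι] (s : ι → ℝ) : 0 < ∑ k, exp (s k) :=
  sum_pos (fun k _ => exp_pos (s k)) univ_nonempty

theorem sum_softmax [Nonempty ι] (s : ι → ℝ) : ∑ j, softmax s j = 1 := by
  simp only [softmax, ← sum_div, div_self (sum_exp_pos s).ne']

theorem exp_neg_mul_log_div {ε x : ℝ} (hε : ε ≠ 0) (hx : 0 < x) :
    exp (-ε * log x / ε) = x⁻¹ := by
  rw [neg_mul, neg_div, mul_div_cancel_left₀ _ hε, exp_neg, exp_log hx]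

theorem exp_add_mul_log_div {ε u x : ℝ} (hε : ε ≠ 0) (hx : 0 < x) :
    exp ((u + ε * log x) / ε) = x * exp (u / ε) := by
  rw [add_div, mul_div_cancel_left₀ _ hε, exp_add, exp_log hx, mul_comm]

theorem mul_mul_exp_eq_mul_softmax [Nonempty ι] {ε : ℝ} (hε : ε ≠ 0) {b : ι → ℝ}
    (hb : ∀ j, 0 < b j) {q g s : ι → ℝ} (hs : ∀ j, s j = (q j + g j + ε * log (b j)) / ε)
    {f : ℝ} (hf : f = -ε * log (∑ j, exp (s j))) (α : ℝ) (j : ι) :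
    α * b j * exp ((f + g j + q j) / ε) = α * softmax s j := by
  have hnormalizer : exp (f / ε) = (∑ k, exp (s k))⁻¹ := by
    rw [hf, exp_neg_mul_log_div hε (sum_exp_pos s)]
  have hscore : exp (s j) = b j * exp ((q j + g j) / ε) := by
    rw [hs, exp_add_mul_log_div hε (hb j)]
  unfold softmax
  rw [hscore, show f + g j + q j = f + (q j + g j) by ring, add_div, exp_add,
    hnormalizer]
  ring

theorem mul_sub_sum_mul_eq_sum_mul_sub {p y : ι → ℝ} {c : ℝ} (hp : ∑ j, p j = c)
    (x : ℝ) :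
    c * x - ∑ j, p j * y j = ∑ j, p j * (x - y j) := by
  simp only [mul_sub, sum_sub_distrib, ← sum_mul, hp]

end Sinkhorn

end

theorem barycentric_projection_attention_form_general
    (n m d : ℕ) (hm : 0 < m)
    (X : Fin n → Fin d → ℝ) (Y : Fin m → Fin d → ℝ)
    (ε : ℝ) (hε : 0 < ε)
    (a : Fin n → ℝ) (b : Fin m → ℝ)
    (ha : ∀ i, 0 < a i) (hb : ∀ j, 0 < b j)
    (fh : Fin n → ℝ) (gh : Fin m → ℝ)
    (QK : Fin n → Fin m → ℝ)
    (SX : Fin n → Fin m → ℝ)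
    (hSX : ∀ i j, SX i j = (QK i j + gh j + ε * Real.log (b j)) / ε)
    (P : Fin n → Fin m → ℝ)
    (hP : ∀ i j, P i j = a i * b j * Real.exp ((fh i + gh j + QK i j) / ε))
    (hfix_f : ∀ i, fh i = -ε * Real.log (∑ j, Real.exp (SX i j)))
    (T : Fin n → Fin d → ℝ)
    (hT : ∀ i t, T i t = (1 / a i) * ∑ j, P i j * Y j t) :
    -- (i) barycentric projection equals the attention output
    (∀ i t, T i t
        = ∑ j, (Real.exp (SX i j) / ∑ k, Real.exp (SX i k)) * Y j t)
    -- (ii) the weighted residual equals the transport residual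
    ∧ (∀ i t, 2 * a i * (X i t - T i t)
        = 2 * ∑ j, P i j * (X i t - Y j t))
    -- hence the two gradient expressions coincide entrywise
    ∧ (∀ i t,
        2 * a i * (X i t
            - ∑ j, (Real.exp (SX i j) / ∑ k, Real.exp (SX i k)) * Y j t)
        = 2 * (a i * X i t - ∑ j, P i j * Y j t)) := by
  have : Nonempty (Fin m) := ⟨⟨0, hm⟩⟩
  have hrow (i j) : P i j = a i * Sinkhorn.softmax (SX i) j :=
    (hP i j).trans (Sinkhorn.mul_mul_exp_eq_mul_softmax hε.ne' hb (hSX i) (hfix_f i) (a i) j)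
  have hmass (i) : ∑ j, P i j = a i := by
    simp only [hrow, ← mul_sum, Sinkhorn.sum_softmax, mul_one]
  have hweighted (i t) : a i * T i t = ∑ j, P i j * Y j t := by
    rw [hT, ← mul_assoc, mul_one_div_cancel (ha i).ne', one_mul]
  have hattention (i t) :
      T i t = ∑ j, (exp (SX i j) / ∑ k, exp (SX i k)) * Y j t := by
    rw [← mul_right_inj' (ha i).ne', hweighted, mul_sum]
    simp only [hrow, Sinkhorn.softmax, mul_assoc]
  refine ⟨hattention, fun i t => ?_, fun i t => ?_⟩
  · rw [mul_assoc, mul_sub, hweighted, ← hmass i, Sinkhorn.mul_sub_sum_mul_eq_sum_mul_sub rfl]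
  · rw [← hattention, mul_assoc, mul_sub, hweighted]

/-- Barycentric projection and gradient of entropic OT in attention form.
At a Sinkhorn fixed point `(f̂*, ĝ*)` with coupling `P* = P(f̂*, ĝ*)` and
scores `S_X* = S_X(ĝ*)`: (i) `diag(a)⁻¹ P* Y = Softmax_row(S_X*) Y`
(the barycentric projection `T_ε(x_i) = (1/a_i) Σ_j P*_{ij} y_j` equals the
`i`-th row of the attention output); (ii) for each `i`,
`2 a_i (x_i − T_ε(x_i)) = 2 Σ_j P*_{ij}(x_i − y_j)`, so the residual-attention
gradient `2 diag(a)(X − Softmax_row(S_X*) Y)` equals `2(diag(a) X − P* Y)`. -/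
theorem barycentric_projection_attention_form
    (n m d : ℕ) (hn : 0 < n) (hm : 0 < m) (hd : 0 < d)
    (X : Fin n → Fin d → ℝ) (Y : Fin m → Fin d → ℝ)
    (ε : ℝ) (hε : 0 < ε)
    (a : Fin n → ℝ) (b : Fin m → ℝ)
    (ha : ∀ i, 0 < a i) (hb : ∀ j, 0 < b j)
    (fh : Fin n → ℝ) (gh : Fin m → ℝ)
    (QK : Fin n → Fin m → ℝ) (hQK : ∀ i j, QK i j = 2 * ∑ t, X i t * Y j t)
    (SX : Fin n → Fin m → ℝ)
    (hSX : ∀ i j, SX i j = (QK i j + gh j + ε * Real.log (b j)) / ε)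
    (SY : Fin m → Fin n → ℝ)
    (hSY : ∀ j i, SY j i = (QK i j + fh i + ε * Real.log (a i)) / ε)
    (P : Fin n → Fin m → ℝ)
    (hP : ∀ i j, P i j = a i * b j * Real.exp ((fh i + gh j + QK i j) / ε))
    (hfix_f : ∀ i, fh i = -ε * Real.log (∑ j, Real.exp (SX i j)))
    (hfix_g : ∀ j, gh j = -ε * Real.log (∑ i, Real.exp (SY j i)))
    (T : Fin n → Fin d → ℝ)
    (hT : ∀ i t, T i t = (1 / a i) * ∑ j, P i j * Y j t) :
    -- (i) barycentric projection equals the attention output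
    (∀ i t, T i t
        = ∑ j, (Real.exp (SX i j) / ∑ k, Real.exp (SX i k)) * Y j t)
    -- (ii) the weighted residual equals the transport residual
    ∧ (∀ i t, 2 * a i * (X i t - T i t)
        = 2 * ∑ j, P i j * (X i t - Y j t))
    -- hence the two gradient expressions coincide entrywise
    ∧ (∀ i t,
        2 * a i * (X i t
            - ∑ j, (Real.exp (SX i j) / ∑ k, Real.exp (SX i k)) * Y j t)
        = 2 * (a i * X i t - ∑ j, P i j * Y j t)) :=
  barycentric_projection_attention_form_general n m d hm X Y ε hε a b ha hb fh gh QK SX hSX P hP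
    hfix_f T hT
end

section
/- Let P ∈ ℝ^{n×m} have nonnegative entries, set a = P·1_m and b = Pᵀ·1_n, and assume a_i > 0 for all i. Then the Schur complement S := diag(b) − Pᵀ·diag(a)⁻¹·P ∈ ℝ^{m×m} is symmetric positive semidefinite and satisfies S·1_m = 0. -/
/-!
The matrix `H = [[diag a, P], [Pᵀ, diag b]]` has quadratic form
`(u, w) ↦ ∑ i j, P i j * (u i + w j) ^ 2`, so it is positive semidefinite as soon as `P ≥ 0`.
Since `a > 0`, its upper-left block `diag a` is positive definite, and the Schur complement
`S = diag b - Pᵀ diag(a)⁻¹ P` of that block is then positive semidefinite as well.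
Finally `diag(a)⁻¹ P 1 = diag(a)⁻¹ a = 1`, so `S 1 = b - Pᵀ 1 = 0`.
-/

namespace Matrix

variable {m n : Type*} [Fintype m] [Fintype n] [DecidableEq m] [DecidableEq n]

theorem diagonal_mulVec_eq_mul {α : Type*} [NonUnitalNonAssocSemiring α] (v w : m → α) :
    diagonal v *ᵥ w = v * w :=
  funext (mulVec_diagonal v w)

theorem inv_diagonal_of_ne_zero {K : Type*} [Field K] {d : m → K} (h : ∀ i, d i ≠ 0) :
    (diagonal d)⁻¹ = diagonal d⁻¹ :=
  inv_eq_left_inv <| by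
    rw [diagonal_mul_diagonal, ← diagonal_one]
    exact congrArg diagonal (funext fun i => inv_mul_cancel₀ (h i))

theorem dotProduct_fromBlocks_diagonal_mulVec_one_mulVec {R : Type*} [CommRing R]
    (P : Matrix m n R) (x : m ⊕ n → R) :
    x ⬝ᵥ (fromBlocks (diagonal (P *ᵥ 1)) P Pᵀ (diagonal (Pᵀ *ᵥ 1)) *ᵥ x) =
      ∑ i, ∑ j, P i j * (x (.inl i) + x (.inr j)) ^ 2 := by
  rw [← Sum.elim_comp_inl_inr x, fromBlocks_mulVec, Sum.elim_comp_inl, Sum.elim_comp_inr,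
    sumElim_dotProduct_sumElim]
  simp only [dotProduct, Pi.add_apply, mulVec_diagonal]
  simp only [mulVec, dotProduct, transpose_apply, Pi.one_apply, Function.comp_apply,
    Sum.elim_inl, Sum.elim_inr, mul_one, mul_add, Finset.sum_add_distrib, Finset.sum_mul,
    Finset.mul_sum]
  rw [Finset.sum_comm (s := (Finset.univ : Finset n)) (t := Finset.univ),
    Finset.sum_comm (s := (Finset.univ : Finset n)) (t := Finset.univ)]
  simp only [← Finset.sum_add_distrib]
  exact Finset.sum_congr rfl fun i _ => Finset.sum_congr rfl fun j _ => by ring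

theorem posSemidef_fromBlocks_diagonal_mulVec_one {P : Matrix m n ℝ} (hP : ∀ i j, 0 ≤ P i j) :
    (fromBlocks (diagonal (P *ᵥ 1)) P Pᵀ (diagonal (Pᵀ *ᵥ 1))).PosSemidef := by
  refine .of_dotProduct_mulVec_nonneg (.fromBlocks (isHermitian_diagonal _)
    (conjTranspose_eq_transpose_of_trivial P) (isHermitian_diagonal _)) fun x => ?_
  rw [star_trivial, dotProduct_fromBlocks_diagonal_mulVec_one_mulVec]
  exact Finset.sum_nonneg fun i _ => Finset.sum_nonneg fun j _ =>
    mul_nonneg (hP i j) (sq_nonneg _)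

theorem posSemidef_diagonal_sub_transpose_mul_diagonal_inv_mul {P : Matrix m n ℝ}
    (hP : ∀ i j, 0 ≤ P i j) (hpos : ∀ i, 0 < (P *ᵥ 1) i) :
    (diagonal (Pᵀ *ᵥ 1) - Pᵀ * diagonal (P *ᵥ 1)⁻¹ * P).PosSemidef := by
  have hA : (diagonal (P *ᵥ 1)).PosDef := posDef_diagonal_iff.mpr hpos
  let := hA.isUnit.invertible
  have hSchur := (hA.fromBlocks₁₁ P (diagonal (Pᵀ *ᵥ 1))).mp
  rw [conjTranspose_eq_transpose_of_trivial, inv_diagonal_of_ne_zero fun i => (hpos i).ne']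
    at hSchur
  exact hSchur (posSemidef_fromBlocks_diagonal_mulVec_one hP)

theorem diagonal_sub_transpose_mul_diagonal_inv_mul_mulVec_one {K : Type*} [Field K]
    {P : Matrix m n K} (hP : ∀ i, (P *ᵥ 1) i ≠ 0) :
    (diagonal (Pᵀ *ᵥ 1) - Pᵀ * diagonal (P *ᵥ 1)⁻¹ * P) *ᵥ 1 = 0 := by
  have hinv : (P *ᵥ 1)⁻¹ * P *ᵥ 1 = 1 := funext fun i => inv_mul_cancel₀ (hP i)
  rw [sub_mulVec, ← mulVec_mulVec, ← mulVec_mulVec, diagonal_mulVec_eq_mul,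
    diagonal_mulVec_eq_mul, hinv, mul_one, sub_self]

end Matrix

/-- The Schur complement `S = diag(b) − Pᵀ diag(a)⁻¹ P`, built from a
nonnegative coupling `P` with marginals `a = P·1 > 0` and `b = Pᵀ·1`,
is symmetric positive semidefinite and satisfies `S·1_m = 0`. -/
theorem schur_complement_psd
    (n m : ℕ)
    (P : Matrix (Fin n) (Fin m) ℝ) (hP : ∀ i j, 0 ≤ P i j)
    (a : Fin n → ℝ) (ha : a = P.mulVec (fun _ => (1 : ℝ)))
    (hapos : ∀ i, 0 < a i)
    (b : Fin m → ℝ) (hb : b = P.transpose.mulVec (fun _ => (1 : ℝ)))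
    (S : Matrix (Fin m) (Fin m) ℝ)
    (hS : S = Matrix.diagonal b
        - P.transpose * Matrix.diagonal (fun i => (a i)⁻¹) * P) :
    S.PosSemidef ∧ S.mulVec (fun _ => (1 : ℝ)) = 0 := by
  subst ha hb hS
  exact ⟨Matrix.posSemidef_diagonal_sub_transpose_mul_diagonal_inv_mul hP hapos,
    Matrix.diagonal_sub_transpose_mul_diagonal_inv_mul_mulVec_one fun i => (hapos i).ne'⟩
end

section
/- Fix Y ∈ ℝ^{m×d} with rows y_j, weights a ∈ ℝ^n and b ∈ ℝ^m with strictly positive entries, and ε > 0. Suppose f : ℝ^{n×d} → ℝ^n and g : ℝ^{n×d} → ℝ^m are differentiable at X, and define P(X') ∈ ℝ^{n×m} by P(X')_{ij} = a_i b_j exp((f_i(X') + g_j(X') − ‖x'_i − y_j‖₂²)/ε). Assume the marginal constraints P(X')·1_m = a and P(X')ᵀ·1_n = b hold identically for all X' in a neighborhood of X. Then for every k ∈ {1,…,n} and t ∈ {1,…,d}, the partial derivatives at X satisfy, for all i ∈ {1,…,n}: a_i·(∂f_i/∂x_{k,t}) + Σ_{j=1}^m P_{ij}·(∂g_j/∂x_{k,t})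 = δ_{ik}·Σ_{j=1}^m 2(x_{k,t} − y_{j,t})·P_{kj}; and for all j ∈ {1,…,m}: Σ_{i=1}^n P_{ij}·(∂f_i/∂x_{k,t}) + b_j·(∂g_j/∂x_{k,t}) = 2(x_{k,t} − y_{j,t})·P_{kj}, where P = P(X). Equivalently, the stacked Jacobians (∂f/∂x_k; ∂g/∂x_k) solve the linear system H·(∂f/∂x_k; ∂g/∂x_k) = (e_k·(B_k 1_m)ᵀ; B_kᵀ) with H = [[diag(a), P], [Pᵀ, diag(b)]] and (B_k)_{tj} = 2(x_{k,t} − y_{j,t})·P_{kj}. -/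
/-!
Write `P_ij = a_i b_j exp((f_i + g_j - c_ij)/ε)`, so that `dP_ij = (P_ij/ε)(df_i + dg_j - dc_ij)`.
Since the marginals of `P` are constant near `X`, their differentials vanish there:
`Σ_j P_ij (df_i + dg_j - dc_ij) = 0` and `Σ_i P_ij (df_i + dg_j - dc_ij) = 0`, and the
marginal identities at `X` turn `Σ_j P_ij` into `a_i` and `Σ_i P_ij` into `b_j`. For the
squared-Euclidean cost, only the row `c_kj` depends on `x_k`, with
`∂c_kj/∂x_{k,t} = 2(x_{k,t} - y_{j,t})`.
-/

open Real Filter Topology ContinuousLinearMap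

section
variable {E : Type*} [NormedAddCommGroup E] [NormedSpace ℝ E] {x : E}

theorem sum_mul_apply_eq_zero_of_hasFDerivAt_smul {κ : Type*} [Fintype κ]
    {P : κ → E → ℝ} {L : κ → E →L[ℝ] ℝ} {ε c : ℝ} (hε : ε ≠ 0)
    (hP : ∀ j, HasFDerivAt (P j) ((P j x / ε) • L j) x)
    (hconst : ∀ᶠ y in 𝓝 x, ∑ j, P j y = c) (v : E) :
    ∑ j, P j x * L j v = 0 := by
  have hzero : ∑ j, (P j x / ε) • L j = 0 :=
    (HasFDerivAt.fun_sum fun j _ => hP j).unique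
      ((hasFDerivAt_const c x).congr_of_eventuallyEq hconst)
  have hv := congrArg (· v) hzero
  simp only [sum_apply, smul_apply, smul_eq_mul, zero_apply, div_mul_eq_mul_div,
    ← Finset.sum_div, div_eq_zero_iff, hε, or_false] at hv
  exact hv

variable {ι κ : Type*}

noncomputable def gibbsCoupling (a : ι → ℝ) (b : κ → ℝ) (ε : ℝ) (f : E → ι → ℝ)
    (g : E → κ → ℝ) (c : E → ι → κ → ℝ) (y : E) (i : ι) (j : κ) : ℝ :=
  a i * b j * exp ((f y i + g y j - c y i j) / ε)

variable {a : ι → ℝ} {b : κ → ℝ} {ε : ℝ} {f : E → ι → ℝ} {g : E → κ → ℝ}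
  {c : E → ι → κ → ℝ} {f' : E →L[ℝ] ι → ℝ} {g' : E →L[ℝ] κ → ℝ} {c' : ι → κ → E →L[ℝ] ℝ}

theorem hasFDerivAt_gibbsCoupling (hf : HasFDerivAt f f' x) (hg : HasFDerivAt g g' x)
    {i : ι} {j : κ} (hc : HasFDerivAt (fun y => c y i j) (c' i j) x) :
    HasFDerivAt (fun y => gibbsCoupling a b ε f g c y i j)
      ((gibbsCoupling a b ε f g c x i j / ε) • (proj i ∘L f' + proj j ∘L g' - c' i j)) x := by
  have hexponent : HasFDerivAt (fun y => (f y i + g y j - c y i j) / ε)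
      (ε⁻¹ • (proj i ∘L f' + proj j ∘L g' - c' i j)) x := by
    simp only [div_eq_mul_inv]
    exact (((hasFDerivAt_pi'.1 hf i).fun_add (hasFDerivAt_pi'.1 hg j)).fun_sub hc).mul_const ε⁻¹
  refine (hexponent.exp.const_mul (a i * b j)).congr_fderiv ?_
  simp only [smul_smul, gibbsCoupling, div_eq_mul_inv, mul_assoc]

variable (hε : ε ≠ 0) (hf : HasFDerivAt f f' x) (hg : HasFDerivAt g g' x)
  (hc : ∀ i j, HasFDerivAt (fun y => c y i j) (c' i j) x)
include hε hf hg hc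

theorem gibbsCoupling_fderiv_row_marginal [Fintype κ] {i : ι}
    (hrow : ∀ᶠ y in 𝓝 x, ∑ j, gibbsCoupling a b ε f g c y i j = a i) (v : E) :
    a i * f' v i + ∑ j, gibbsCoupling a b ε f g c x i j * g' v j
      = ∑ j, gibbsCoupling a b ε f g c x i j * c' i j v := by
  have h := sum_mul_apply_eq_zero_of_hasFDerivAt_smul hε
    (fun j => hasFDerivAt_gibbsCoupling hf hg (hc i j)) hrow v
  simp only [add_apply, sub_apply, coe_comp, Function.comp_apply, proj_apply, mul_sub,
    mul_add, Finset.sum_add_distrib, Finset.sum_sub_distrib, ← Finset.sum_mul,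
    hrow.self_of_nhds] at h
  linarith

theorem gibbsCoupling_fderiv_col_marginal [Fintype ι] {j : κ}
    (hcol : ∀ᶠ y in 𝓝 x, ∑ i, gibbsCoupling a b ε f g c y i j = b j) (v : E) :
    ∑ i, gibbsCoupling a b ε f g c x i j * f' v i + b j * g' v j
      = ∑ i, gibbsCoupling a b ε f g c x i j * c' i j v := by
  have h := sum_mul_apply_eq_zero_of_hasFDerivAt_smul hε
    (fun i => hasFDerivAt_gibbsCoupling hf hg (hc i j)) hcol v
  simp only [add_apply, sub_apply, coe_comp, Function.comp_apply, proj_apply, mul_sub,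
    mul_add, Finset.sum_add_distrib, Finset.sum_sub_distrib, ← Finset.sum_mul,
    hcol.self_of_nhds] at h
  linarith

end

theorem hasFDerivAt_sum_sq_sub {ι τ : Type*} [Fintype ι] [Fintype τ] (X : ι → τ → ℝ) (i : ι)
    (y : τ → ℝ) :
    HasFDerivAt (fun X' : ι → τ → ℝ => ∑ s, (X' i s - y s) ^ 2)
      (∑ s, (2 * (X i s - y s)) • (proj s : (τ → ℝ) →L[ℝ] ℝ).comp (proj i)) X := by
  refine HasFDerivAt.fun_sum fun s _ => ?_
  have hcoord :=
    ((proj s : (τ → ℝ) →L[ℝ] ℝ).comp (proj i) : (ι → τ → ℝ) →L[ℝ] ℝ).hasFDerivAt (x := X)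
  simpa [two_mul, add_smul] using (hcoord.sub_const (y s)).pow 2

theorem sum_smul_proj_comp_proj_apply_single {ι τ : Type*} [Fintype τ] [DecidableEq ι]
    [DecidableEq τ] (w : τ → ℝ) (i k : ι) (t : τ) :
    (∑ s, w s • ((proj s : (τ → ℝ) →L[ℝ] ℝ).comp (proj i) : (ι → τ → ℝ) →L[ℝ] ℝ))
      (Pi.single k (Pi.single t 1)) = if i = k then w t else 0 := by
  rcases eq_or_ne i k with rfl | hik <;> simp [Pi.single_apply, *]

theorem implicit_jacobian_linear_system_general
    (n m d : ℕ)
    (Y : Fin m → Fin d → ℝ)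
    (a : Fin n → ℝ)
    (b : Fin m → ℝ)
    (ε : ℝ) (hε : 0 < ε)
    (f : (Fin n → Fin d → ℝ) → Fin n → ℝ)
    (g : (Fin n → Fin d → ℝ) → Fin m → ℝ)
    (X : Fin n → Fin d → ℝ)
    (hf : DifferentiableAt ℝ f X) (hg : DifferentiableAt ℝ g X)
    (Pfun : (Fin n → Fin d → ℝ) → Fin n → Fin m → ℝ)
    (hPfun : ∀ X' i j, Pfun X' i j
        = a i * b j * Real.exp ((f X' i + g X' j - ∑ t, (X' i t - Y j t) ^ 2) / ε))
    (hmarg : ∀ᶠ X' in nhds X,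
        (∀ i, ∑ j, Pfun X' i j = a i) ∧ (∀ j, ∑ i, Pfun X' i j = b j))
    (E : Fin n → Fin d → (Fin n → Fin d → ℝ))
    (hE : ∀ k t k' t', E k t k' t' = if k' = k ∧ t' = t then (1 : ℝ) else 0) :
    (∀ (k : Fin n) (t : Fin d) (i : Fin n),
        a i * fderiv ℝ f X (E k t) i
          + ∑ j, Pfun X i j * fderiv ℝ g X (E k t) j
        = (if i = k then (1 : ℝ) else 0)
            * ∑ j, 2 * (X k t - Y j t) * Pfun X k j)
    ∧ (∀ (k : Fin n) (t : Fin d) (j : Fin m),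
        (∑ i, Pfun X i j * fderiv ℝ f X (E k t) i)
          + b j * fderiv ℝ g X (E k t) j
        = 2 * (X k t - Y j t) * Pfun X k j) := by
  obtain rfl : Pfun = gibbsCoupling a b ε f g (fun X' i j => ∑ t, (X' i t - Y j t) ^ 2) :=
    funext fun X' => funext fun i => funext fun j => hPfun X' i j
  have hcost := fun i j => hasFDerivAt_sum_sq_sub X i (Y j)
  have hEkt : ∀ k t, E k t = Pi.single k (Pi.single t 1) := fun k t => by
    ext k' t'
    rw [hE]
    by_cases hk : k' = k <;> by_cases ht : t' = t <;> simp [hk, ht]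
  refine ⟨fun k t i => ?_, fun k t j => ?_⟩
  · rw [gibbsCoupling_fderiv_row_marginal hε.ne' hf.hasFDerivAt hg.hasFDerivAt hcost
      (hmarg.mono fun _ h => h.1 i)]
    simp only [hEkt, sum_smul_proj_comp_proj_apply_single]
    split_ifs <;> simp [Finset.mul_sum, mul_comm, *]
  · rw [gibbsCoupling_fderiv_col_marginal hε.ne' hf.hasFDerivAt hg.hasFDerivAt hcost
      (hmarg.mono fun _ h => h.2 j)]
    simp only [hEkt, sum_smul_proj_comp_proj_apply_single, mul_ite, mul_zero,
      Finset.sum_ite_eq', Finset.mem_univ, if_true]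
    ring

/-- Implicit-differentiation linear system for the optimal entropic dual
potentials with squared-Euclidean cost. If `f, g` are differentiable at `X`
and the coupling `P(X')_{ij} = a_i b_j exp((f_i(X') + g_j(X') − ‖x'_i − y_j‖²)/ε)`
satisfies the marginal constraints in a neighborhood of `X`, then the partial
derivatives of `(f, g)` in each coordinate direction `x_{k,t}` solve the
linear system `H·(∂f; ∂g) = (e_k (B_k 1)ᵀ; B_kᵀ)`,
with `H = [[diag a, P], [Pᵀ, diag b]]` and `(B_k)_{tj} = 2(x_{k,t} − y_{j,t}) P_{kj}`. -/
theorem implicit_jacobian_linear_system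
    (n m d : ℕ)
    (Y : Fin m → Fin d → ℝ)
    (a : Fin n → ℝ) (ha : ∀ i, 0 < a i)
    (b : Fin m → ℝ) (hb : ∀ j, 0 < b j)
    (ε : ℝ) (hε : 0 < ε)
    (f : (Fin n → Fin d → ℝ) → Fin n → ℝ)
    (g : (Fin n → Fin d → ℝ) → Fin m → ℝ)
    (X : Fin n → Fin d → ℝ)
    (hf : DifferentiableAt ℝ f X) (hg : DifferentiableAt ℝ g X)
    (Pfun : (Fin n → Fin d → ℝ) → Fin n → Fin m → ℝ)
    (hPfun : ∀ X' i j, Pfun X' i j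
        = a i * b j * Real.exp ((f X' i + g X' j - ∑ t, (X' i t - Y j t) ^ 2) / ε))
    (hmarg : ∀ᶠ X' in nhds X,
        (∀ i, ∑ j, Pfun X' i j = a i) ∧ (∀ j, ∑ i, Pfun X' i j = b j))
    (E : Fin n → Fin d → (Fin n → Fin d → ℝ))
    (hE : ∀ k t k' t', E k t k' t' = if k' = k ∧ t' = t then (1 : ℝ) else 0) :
    (∀ (k : Fin n) (t : Fin d) (i : Fin n),
        a i * fderiv ℝ f X (E k t) i
          + ∑ j, Pfun X i j * fderiv ℝ g X (E k t) j
        = (if i = k then (1 : ℝ) else 0)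
            * ∑ j, 2 * (X k t - Y j t) * Pfun X k j)
    ∧ (∀ (k : Fin n) (t : Fin d) (j : Fin m),
        (∑ i, Pfun X i j * fderiv ℝ f X (E k t) i)
          + b j * fderiv ℝ g X (E k t) j
        = 2 * (X k t - Y j t) * Pfun X k j) :=
  implicit_jacobian_linear_system_general n m d Y a b ε hε f g X hf hg Pfun hPfun hmarg E hE
end

section
/- Under the hypotheses on f, g, P of the Jacobian lemma (differentiability at X and marginal constraints P(X')·1_m = a, P(X')ᵀ·1_n = b in a neighborhood of X), define the gradient field G(X) ∈ ℝ^{n×d} by G(X)_{k,t} = 2·Σ_{j=1}^m P(X)_{kj}·(x_{k,t} − y_{j,t}). Then G is differentiable at X and for all k, s ∈ {1,…,n} and t, l ∈ {1,…,d}: ∂G_{k,t}/∂x_{s,l} = (1/ε)·Σ_{j=1}^m 2(x_{k,t} − y_{j,t})·P_{kj}·(∂f_k/∂x_{s,l} + ∂g_j/∂x_{s,l}) + 2·a_k·δ_{ks}·δ_{tl} − (4/ε)·δ_{ks}·Σ_{j=1}^m P_{kj}·(x_{k,t} − y_{j,t})·(x_{k,l} − y_{j,l}), where P = P(X). -/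
/-!
Each entry of `G` is `2 ∑ⱼ Pₖⱼ (xₖₜ - yⱼₜ)`, so the product rule splits its derivative into
`2 ∑ⱼ Pₖⱼ ∂(xₖₜ)` and `2 ∑ⱼ (xₖₜ - yⱼₜ) ∂Pₖⱼ`. The Gibbs form of the plan gives
`∂Pₖⱼ = (Pₖⱼ / ε) (∂fₖ + ∂gⱼ - 2 ∑ₜ' (xₖₜ' - yⱼₜ') ∂xₖₜ')`, and in the direction of the basis matrix
`E s l` the row marginal `∑ⱼ Pₖⱼ = aₖ` turns the first sum into `2 aₖ δₖₛ δₜₗ`.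
-/

open Finset ContinuousLinearMap

theorem HasFDerivAt.const_mul_exp_div {E : Type*} [NormedAddCommGroup E] [NormedSpace ℝ E]
    {φ : E → ℝ} {φ' : E →L[ℝ] ℝ} {x : E} (hφ : HasFDerivAt φ φ' x) (c ε : ℝ) :
    HasFDerivAt (fun y => c * Real.exp (φ y / ε)) ((c * Real.exp (φ x / ε) / ε) • φ') x := by
  have h := ((hφ.mul_const ε⁻¹).exp).const_mul c
  simp only [← div_eq_mul_inv, smul_smul] at h
  exact h.congr_fderiv (by rw [mul_div_assoc])

theorem sum_mul_ite_and {ι κ R : Type*} [Fintype κ] [DecidableEq ι] [DecidableEq κ] [Semiring R]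
    (w : κ → R) (k s : ι) (l : κ) :
    ∑ t, w t * (if k = s ∧ t = l then 1 else 0) = if k = s then w l else 0 := by
  split_ifs with h <;> simp [h]

section Entries

variable {ι κ μ : Type*}

def entryCLM (i : ι) (t : κ) : (ι → κ → ℝ) →L[ℝ] ℝ :=
  (proj t).comp (proj (R := ℝ) (φ := fun _ : ι => κ → ℝ) i)

@[simp]
theorem entryCLM_apply (i : ι) (t : κ) (V : ι → κ → ℝ) : entryCLM i t V = V i t :=
  rfl

variable [Fintype ι] [Fintype κ]

theorem hasFDerivAt_sum_sub_sq (X : ι → κ → ℝ) (i : ι) (y : κ → ℝ) :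
    HasFDerivAt (fun X' : ι → κ → ℝ => ∑ t, (X' i t - y t) ^ 2)
      (∑ t, (2 * (X i t - y t)) • entryCLM i t) X :=
  HasFDerivAt.fun_sum fun t _ => by
    simpa using (((entryCLM i t).hasFDerivAt (x := X)).sub_const (y t)).pow 2

theorem hasFDerivAt_gibbs_entry {u w : (ι → κ → ℝ) → ℝ} {u' w' : (ι → κ → ℝ) →L[ℝ] ℝ}
    {X : ι → κ → ℝ} (hu : HasFDerivAt u u' X) (hw : HasFDerivAt w w' X) (i : ι) (y : κ → ℝ)
    (c ε : ℝ) :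
    HasFDerivAt (fun X' => c * Real.exp ((u X' + w X' - ∑ t, (X' i t - y t) ^ 2) / ε))
      ((c * Real.exp ((u X + w X - ∑ t, (X i t - y t) ^ 2) / ε) / ε) •
        (u' + w' - ∑ t, (2 * (X i t - y t)) • entryCLM i t)) X :=
  ((hu.add hw).sub (hasFDerivAt_sum_sub_sq X i y)).const_mul_exp_div c ε

theorem hasFDerivAt_sum_mul_sub [Fintype μ] {P : (ι → κ → ℝ) → μ → ℝ}
    {P' : μ → (ι → κ → ℝ) →L[ℝ] ℝ} {X : ι → κ → ℝ}
    (hP : ∀ j, HasFDerivAt (fun X' => P X' j) (P' j) X) (Y : μ → κ → ℝ) (k : ι) (t : κ) :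
    HasFDerivAt (fun X' => ∑ j, P X' j * (X' k t - Y j t))
      (∑ j, (P X j • entryCLM k t + (X k t - Y j t) • P' j)) X :=
  HasFDerivAt.fun_sum fun j _ =>
    (hP j).mul (((entryCLM k t).hasFDerivAt (x := X)).sub_const (Y j t))

end Entries

theorem hessian_entrywise_decomposition_general
    (n m d : ℕ)
    (Y : Fin m → Fin d → ℝ)
    (a : Fin n → ℝ)
    (b : Fin m → ℝ)
    (ε : ℝ)
    (f : (Fin n → Fin d → ℝ) → Fin n → ℝ)
    (g : (Fin n → Fin d → ℝ) → Fin m → ℝ)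
    (X : Fin n → Fin d → ℝ)
    (hf : DifferentiableAt ℝ f X) (hg : DifferentiableAt ℝ g X)
    (Pfun : (Fin n → Fin d → ℝ) → Fin n → Fin m → ℝ)
    (hPfun : ∀ X' i j, Pfun X' i j
        = a i * b j * Real.exp ((f X' i + g X' j - ∑ t, (X' i t - Y j t) ^ 2) / ε))
    (hmarg : ∀ᶠ X' in nhds X,
        (∀ i, ∑ j, Pfun X' i j = a i) ∧ (∀ j, ∑ i, Pfun X' i j = b j))
    (G : (Fin n → Fin d → ℝ) → Fin n → Fin d → ℝ)
    (hG : ∀ X' k t, G X' k t = 2 * ∑ j, Pfun X' k j * (X' k t - Y j t))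
    (E : Fin n → Fin d → (Fin n → Fin d → ℝ))
    (hE : ∀ s l k' t', E s l k' t' = if k' = s ∧ t' = l then (1 : ℝ) else 0) :
    DifferentiableAt ℝ G X
    ∧ (∀ (k s : Fin n) (t l : Fin d),
        fderiv ℝ G X (E s l) k t
          = (1 / ε) * ∑ j, 2 * (X k t - Y j t) * Pfun X k j
                * (fderiv ℝ f X (E s l) k + fderiv ℝ g X (E s l) j)
            + 2 * a k * (if k = s then (1 : ℝ) else 0)
                * (if t = l then (1 : ℝ) else 0)
            - (4 / ε) * (if k = s then (1 : ℝ) else 0)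
                * ∑ j, Pfun X k j * (X k t - Y j t) * (X k l - Y j l)) := by
  have hP := fun k j => hasFDerivAt_gibbs_entry (hasFDerivAt_pi'.1 hf.hasFDerivAt k)
    (hasFDerivAt_pi'.1 hg.hasFDerivAt j) k (Y j) (a k * b j) ε
  simp only [← hPfun] at hP
  obtain rfl : G = fun X' k t => 2 * ∑ j, Pfun X' k j * (X' k t - Y j t) :=
    funext fun X' => funext fun k => funext (hG X' k)
  have hGX := hasFDerivAt_pi.2 fun k => hasFDerivAt_pi.2 fun t =>
    (hasFDerivAt_sum_mul_sub (hP k) Y k t).const_mul 2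
  refine ⟨hGX.differentiableAt, fun k s t l => ?_⟩
  have hδ : (if k = s ∧ t = l then (1 : ℝ) else 0)
      = (if k = s then 1 else 0) * (if t = l then 1 else 0) := by
    rw [ite_zero_mul_ite_zero, one_mul]
  rw [hGX.fderiv, ← hmarg.self_of_nhds.1 k]
  simp only [pi_apply, smul_apply, _root_.sum_apply, add_apply, sub_apply, coe_comp,
    Function.comp_apply, proj_apply, entryCLM_apply, smul_eq_mul, hE, hδ, sum_mul_ite_and]
  simp only [mul_sum, sum_mul, ← sum_add_distrib, ← sum_sub_distrib]
  refine sum_congr rfl fun j _ => ?_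
  split_ifs <;> ring

/-- Entrywise Hessian decomposition of entropic OT. Under the hypotheses of
the implicit-Jacobian lemma, the gradient field
`G(X)_{k,t} = 2 Σ_j P(X)_{kj}(x_{k,t} − y_{j,t})` is differentiable at `X` and
`∂G_{k,t}/∂x_{s,l}` splits into the implicit term (through the potential
Jacobians) and the explicit block-diagonal term. -/
theorem hessian_entrywise_decomposition
    (n m d : ℕ)
    (Y : Fin m → Fin d → ℝ)
    (a : Fin n → ℝ) (ha : ∀ i, 0 < a i)
    (b : Fin m → ℝ) (hb : ∀ j, 0 < b j)
    (ε : ℝ) (hε : 0 < ε)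
    (f : (Fin n → Fin d → ℝ) → Fin n → ℝ)
    (g : (Fin n → Fin d → ℝ) → Fin m → ℝ)
    (X : Fin n → Fin d → ℝ)
    (hf : DifferentiableAt ℝ f X) (hg : DifferentiableAt ℝ g X)
    (Pfun : (Fin n → Fin d → ℝ) → Fin n → Fin m → ℝ)
    (hPfun : ∀ X' i j, Pfun X' i j
        = a i * b j * Real.exp ((f X' i + g X' j - ∑ t, (X' i t - Y j t) ^ 2) / ε))
    (hmarg : ∀ᶠ X' in nhds X,
        (∀ i, ∑ j, Pfun X' i j = a i) ∧ (∀ j, ∑ i, Pfun X' i j = b j))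
    (G : (Fin n → Fin d → ℝ) → Fin n → Fin d → ℝ)
    (hG : ∀ X' k t, G X' k t = 2 * ∑ j, Pfun X' k j * (X' k t - Y j t))
    (E : Fin n → Fin d → (Fin n → Fin d → ℝ))
    (hE : ∀ s l k' t', E s l k' t' = if k' = s ∧ t' = l then (1 : ℝ) else 0) :
    DifferentiableAt ℝ G X
    ∧ (∀ (k s : Fin n) (t l : Fin d),
        fderiv ℝ G X (E s l) k t
          = (1 / ε) * ∑ j, 2 * (X k t - Y j t) * Pfun X k j
                * (fderiv ℝ f X (E s l) k + fderiv ℝ g X (E s l) j)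
            + 2 * a k * (if k = s then (1 : ℝ) else 0)
                * (if t = l then (1 : ℝ) else 0)
            - (4 / ε) * (if k = s then (1 : ℝ) else 0)
                * ∑ j, Pfun X k j * (X k t - Y j t) * (X k l - Y j l)) :=
  hessian_entrywise_decomposition_general n m d Y a b ε f g X hf hg Pfun hPfun hmarg G hG E hE
end

section
/- Let X ∈ ℝ^{n×d}, Y ∈ ℝ^{m×d}, P ∈ ℝ^{n×m}, A ∈ ℝ^{n×d}, ε > 0, and set a = P·1_m ∈ ℝ^n. Define the explicit Hessian block action (E·A) ∈ ℝ^{n×d} entrywise by (E·A)_{k,t} = 2·a_k·A_{k,t} − (4/ε)·Σ_{j=1}^m Σ_{l=1}^d P_{kj}·(x_{k,t} − y_{j,t})·(x_{k,l} − y_{j,l})·A_{k,l}. Define u ∈ ℝ^n by u_k = ⟨x_k, A_k⟩ (rowwise dot product of X and A), u_P ∈ ℝ^n by (u_P)_k = ⟨(PY)_k, A_k⟩, and W = A·Yᵀ ∈ ℝ^{n×m}. Then E·A = 2·diag(a)·A − (4/ε)·( diag(a ⊙ u)·X − diag(u)·(P·Y) − diag(u_P)·X + (P ⊙ W)·Y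 ), where ⊙ denotes the Hadamard (entrywise) product. -/
/-- Streaming decomposition of the explicit Hessian block action. With
`a = P·1`, `u_k = ⟨x_k, A_k⟩`, `(u_P)_k = ⟨(PY)_k, A_k⟩`, `W = A Yᵀ`, the
explicit block action
`(E·A)_{k,t} = 2 a_k A_{k,t} − (4/ε) Σ_j Σ_l P_{kj}(x_{k,t}−y_{j,t})(x_{k,l}−y_{j,l}) A_{k,l}`
equals
`2 diag(a) A − (4/ε)(diag(a⊙u) X − diag(u)(PY) − diag(u_P) X + (P⊙W) Y)`. -/
theorem explicit_hessian_block_streaming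
    (n m d : ℕ)
    (X : Fin n → Fin d → ℝ) (Y : Fin m → Fin d → ℝ)
    (P : Fin n → Fin m → ℝ) (A : Fin n → Fin d → ℝ)
    (ε : ℝ) (hε : 0 < ε)
    (a : Fin n → ℝ) (ha : ∀ k, a k = ∑ j, P k j)
    (u : Fin n → ℝ) (hu : ∀ k, u k = ∑ t, X k t * A k t)
    (PY : Fin n → Fin d → ℝ) (hPY : ∀ k t, PY k t = ∑ j, P k j * Y j t)
    (uP : Fin n → ℝ) (huP : ∀ k, uP k = ∑ t, PY k t * A k t)
    (W : Fin n → Fin m → ℝ) (hW : ∀ k j, W k j = ∑ t, A k t * Y j t)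
    (EA : Fin n → Fin d → ℝ)
    (hEA : ∀ k t, EA k t
        = 2 * a k * A k t
          - (4 / ε) * ∑ j, ∑ l, P k j * (X k t - Y j t) * (X k l - Y j l) * A k l) :
    ∀ k t, EA k t
        = 2 * a k * A k t
          - (4 / ε) * (a k * u k * X k t - u k * PY k t - uP k * X k t
              + ∑ j, P k j * W k j * Y j t) := by
  intro k t
  rw [hEA]
  congr 1
  congr 1
  have key : ∀ j, ∑ l, P k j * (X k t - Y j t) * (X k l - Y j l) * A k l
      = P k j * u k * X k t - P k j * u k * Y j t
        - P k j * (∑ l, Y j l * A k l) * X k t + P k j * W k j * Y j t := by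
    intro j
    rw [hu, hW]
    rw [show (P k j * ∑ l, X k l * A k l) * X k t - (P k j * ∑ l, X k l * A k l) * Y j t
          - (P k j * ∑ l, Y j l * A k l) * X k t + (P k j * ∑ l, A k l * Y j l) * Y j t
        = ∑ l, ((P k j * (X k l * A k l)) * X k t - (P k j * (X k l * A k l)) * Y j t
          - (P k j * (Y j l * A k l)) * X k t + (P k j * (A k l * Y j l)) * Y j t) by
      simp only [Finset.mul_sum, Finset.sum_mul, Finset.sum_sub_distrib, Finset.sum_add_distrib]]
    exact Finset.sum_congr rfl fun l _ => by ring
  simp only [key]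
  rw [Finset.sum_add_distrib, Finset.sum_sub_distrib, Finset.sum_sub_distrib]
  congr 1
  congr 1
  congr 1
  · rw [ha, Finset.sum_mul, Finset.sum_mul]
  · rw [hPY, Finset.mul_sum]
    exact Finset.sum_congr rfl fun j _ => by ring
  · rw [huP]
    simp only [hPY, Finset.sum_mul, Finset.mul_sum]
    rw [Finset.sum_comm]
    refine Finset.sum_congr rfl fun j _ => Finset.sum_congr rfl fun l _ => by ring
end
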